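/- arXiv:2304.10989 — 3 statements merged into one kernel-verified Lean document; each statement's English description precedes it below -/
import Mathlib

section
/- If (x,y) ∈ G with x ∈ ℤ ∖ S₁, y ∈ ℤ ∖ S₂ and x + y = sd for some integer s, then there exists an integer s′ ≥ s + 2 such that AP_{s′} ≠ ∅; in particular m(AP_S) ≥ s + 2. -/
/-!
Take `p ∈ S` with `p.1 ≡ x (mod d)` and `p.1 + p.2` minimal; such `p` exists because every
element of `G` agrees modulo `d` in its first coordinate with an element of `S` (`-q ≡ (d - 1) q`).
Removing `(0, d)` or `(d, 0)` from `p` would keep the residue and lower the level, so `p ∈ AP_S`.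
Since `x ∉ S₁`, `d ∈ S₁` and `x ≡ p.1`, we get `x + d ≤ p.1`; likewise `y + d ≤ p.2`, so the level
of `p` is at least `s + 2`. The levels of `AP_S` are bounded because an Apéry element uses each
generator fewer than `d` times: `d • (a, d - a) = a • (d, 0) + (d - a) • (0, d)`.
-/

open scoped BigOperators

namespace SumsetsCurve

/-- The `s`-fold sumset of `A = {a 0, …, a (n-1)}`:
all sums of `s` elements of `A` (with `0A = {0}`). -/
def sumset (n : ℕ) (a : ℕ → ℕ) (s : ℕ) : Set ℕ :=
  {x | ∃ f : Fin s → ℕ, (∀ i, f i < n) ∧ x = ∑ i, a (f i)}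

/-- The numerical semigroup (additive submonoid of ℕ) generated by `B`. -/
def numSG (B : Set ℕ) : Set ℕ := (AddSubmonoid.closure B : AddSubmonoid ℕ)

/-- `S₁`, the numerical semigroup generated by `A`. -/
def S1 (n : ℕ) (a : ℕ → ℕ) : Set ℕ := numSG {x | ∃ i < n, a i = x}

/-- `S₂`, the numerical semigroup generated by `d - A`. -/
def S2 (n d : ℕ) (a : ℕ → ℕ) : Set ℕ := numSG {x | ∃ i < n, d - a i = x}

/-- The conductor of `S ⊆ ℕ`: the least `c` with `c + ℕ ⊆ S`. -/
noncomputable def conductor (S : Set ℕ) : ℕ := sInf {c | ∀ m, c ≤ m → m ∈ S}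

/-- The genus of `S ⊆ ℕ`: the number of gaps `|ℕ \ S|`. -/
noncomputable def genus (S : Set ℕ) : ℕ := Set.ncard {x : ℕ | x ∉ S}

/-- `C = S ∩ [0, conductor S - 2]` (the inequality is taken in ℤ). -/
def Cpart (S : Set ℕ) : Set ℕ := {x | x ∈ S ∧ (x : ℤ) ≤ (conductor S : ℤ) - 2}

/-- The decomposition `sA = C₁ ⊔ [c₁, sd - c₂] ⊔ (sd - C₂)` of the Structure Theorem,
viewed inside ℤ. -/
def structDecomp (n d : ℕ) (a : ℕ → ℕ) (s : ℕ) : Prop :=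
  (Nat.cast '' sumset n a s : Set ℤ)
      = (Nat.cast '' Cpart (S1 n a))
        ∪ Set.Icc ((conductor (S1 n a) : ℤ)) ((s * d : ℤ) - (conductor (S2 n d a) : ℤ))
        ∪ ((fun c => (s * d : ℤ) - c) '' (Nat.cast '' Cpart (S2 n d a)))
    ∧ Disjoint (Nat.cast '' Cpart (S1 n a) : Set ℤ)
        (Set.Icc ((conductor (S1 n a) : ℤ)) ((s * d : ℤ) - (conductor (S2 n d a) : ℤ)))
    ∧ Disjoint (Nat.cast '' Cpart (S1 n a) : Set ℤ)
        ((fun c => (s * d : ℤ) - c) '' (Nat.cast '' Cpart (S2 n d a)))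
    ∧ Disjoint
        (Set.Icc ((conductor (S1 n a) : ℤ)) ((s * d : ℤ) - (conductor (S2 n d a) : ℤ)))
        ((fun c => (s * d : ℤ) - c) '' (Nat.cast '' Cpart (S2 n d a)))

/-- `σ(A)`: the least `σ` such that the Structure Theorem decomposition holds
for all `s ≥ σ`. -/
noncomputable def sigmaA (n d : ℕ) (a : ℕ → ℕ) : ℕ :=
  sInf {σ | ∀ s, σ ≤ s → structDecomp n d a s}

/-- `r(A)`: the least `r` such that `|sA| = sd + 1 - g₁ - g₂` for all `s ≥ r`
(the regularity of the Hilbert function of `k[C_A]`). -/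
noncomputable def rA (n d : ℕ) (a : ℕ → ℕ) : ℕ :=
  sInf {r | ∀ s, r ≤ s →
    ((sumset n a s).ncard : ℤ)
      = (s : ℤ) * d + 1 - genus (S1 n a) - genus (S2 n d a)}

/-- The homogeneous semigroup `S ⊆ ℕ²` generated by `{(a, d-a) : a ∈ A}`. -/
def SS (n d : ℕ) (a : ℕ → ℕ) : Set (ℕ × ℕ) :=
  (AddSubmonoid.closure {p : ℕ × ℕ | ∃ i < n, p = (a i, d - a i)} : AddSubmonoid (ℕ × ℕ))

/-- The Apery set `AP_S = {p ∈ S : p - (0,d) ∉ S, p - (d,0) ∉ S}`. -/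
def APS (n d : ℕ) (a : ℕ → ℕ) : Set (ℕ × ℕ) :=
  {p ∈ SS n d a |
    (¬ ∃ q ∈ SS n d a, q + (0, d) = p) ∧ (¬ ∃ q ∈ SS n d a, q + (d, 0) = p)}

/-- The exceptional set
`E_S = {p ∈ S : p - (0,d) ∈ S, p - (d,0) ∈ S, p - (d,d) ∉ S}`. -/
def ES (n d : ℕ) (a : ℕ → ℕ) : Set (ℕ × ℕ) :=
  {p ∈ SS n d a |
    (∃ q ∈ SS n d a, q + (0, d) = p) ∧ (∃ q ∈ SS n d a, q + (d, 0) = p) ∧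
      (¬ ∃ q ∈ SS n d a, q + (d, d) = p)}

/-- The level `L_s = {(x,y) ∈ ℕ² : x + y = sd}`. -/
def Lev (d s : ℕ) : Set (ℕ × ℕ) := {p | p.1 + p.2 = s * d}

/-- `AP_s = AP_S ∩ L_s`. -/
def APs (n d : ℕ) (a : ℕ → ℕ) (s : ℕ) : Set (ℕ × ℕ) := APS n d a ∩ Lev d s

/-- `E_s = E_S ∩ L_s`. -/
def Es (n d : ℕ) (a : ℕ → ℕ) (s : ℕ) : Set (ℕ × ℕ) := ES n d a ∩ Lev d s

/-- `m(AP_S) = max {s : AP_s ≠ ∅}`. -/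
noncomputable def mAP (n d : ℕ) (a : ℕ → ℕ) : ℕ := sSup {s | APs n d a s ≠ ∅}

/-- The Apery set of `S₁` with respect to `d`: `{x ∈ S₁ : x - d ∉ S₁}`. -/
def Ap1 (n d : ℕ) (a : ℕ → ℕ) : Set ℕ := {x ∈ S1 n a | ¬ ∃ y ∈ S1 n a, y + d = x}

/-- The Apery set of `S₂` with respect to `d`: `{x ∈ S₂ : x - d ∉ S₂}`. -/
def Ap2 (n d : ℕ) (a : ℕ → ℕ) : Set ℕ := {x ∈ S2 n d a | ¬ ∃ y ∈ S2 n d a, y + d = x}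

/-- `G`, the subgroup of ℤ² generated by `S`. -/
def G (n d : ℕ) (a : ℕ → ℕ) : AddSubgroup (ℤ × ℤ) :=
  AddSubgroup.closure {p | ∃ i < n, p = ((a i : ℤ), (d : ℤ) - (a i : ℤ))}

/-- `S₁` viewed inside ℤ. -/
def S1Z (n : ℕ) (a : ℕ → ℕ) : Set ℤ := Nat.cast '' S1 n a

/-- `S₂` viewed inside ℤ. -/
def S2Z (n d : ℕ) (a : ℕ → ℕ) : Set ℤ := Nat.cast '' S2 n d a

/-- `S' = G ∩ (S₁ × S₂)`. -/
def Sprime (n d : ℕ) (a : ℕ → ℕ) : Set (ℤ × ℤ) :=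
  {p | p ∈ G n d a ∧ p.1 ∈ S1Z n a ∧ p.2 ∈ S2Z n d a}

/-- The homogeneous semigroup `S` viewed inside ℤ². -/
def SZ (n d : ℕ) (a : ℕ → ℕ) : Set (ℤ × ℤ) :=
  (fun p : ℕ × ℕ => ((p.1 : ℤ), (p.2 : ℤ))) '' SS n d a

lemma add_le_of_modEq_of_notMem {M : AddSubmonoid ℕ} {d u : ℕ} {x : ℤ} (hdM : d ∈ M)
    (hu : u ∈ M) (hx : x ∉ (Nat.cast '' (M : Set ℕ) : Set ℤ)) (hux : (u : ℤ) ≡ x [ZMOD d]) :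
    x + d ≤ u := by
  obtain ⟨k, hk⟩ := hux.dvd
  have hk_neg : k < 0 := by
    by_contra! hk0
    refine hx ⟨u + k.toNat • d, M.add_mem hu (M.nsmul_mem hdM _), ?_⟩
    push_cast [smul_eq_mul, Int.toNat_of_nonneg hk0]
    linarith
  nlinarith

variable {n d : ℕ} {a : ℕ → ℕ}

lemma generators_eq_range :
    {p : ℕ × ℕ | ∃ i < n, p = (a i, d - a i)} = Set.range fun i : Fin n => (a i, d - a i) := by
  ext p
  constructor
  · rintro ⟨i, hi, rfl⟩
    exact ⟨⟨i, hi⟩, rfl⟩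
  · rintro ⟨i, rfl⟩
    exact ⟨i, i.2, rfl⟩

lemma mem_SS_iff {p : ℕ × ℕ} :
    p ∈ SS n d a ↔ ∃ c : Fin n → ℕ, p = ∑ i, c i • ((a i, d - a i) : ℕ × ℕ) := by
  rw [SS, SetLike.mem_coe, generators_eq_range]
  exact AddSubmonoid.mem_closure_range_iff_of_fintype

lemma fst_add_snd_sum_smul (hle : ∀ i < n, a i ≤ d) (c : Fin n → ℕ) :
    (∑ i, c i • ((a i, d - a i) : ℕ × ℕ)).1 + (∑ i, c i • ((a i, d - a i) : ℕ × ℕ)).2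
      = (∑ i, c i) * d := by
  simp only [Prod.fst_sum, Prod.snd_sum, Prod.smul_fst, Prod.smul_snd, smul_eq_mul,
    ← Finset.sum_add_distrib, Finset.sum_mul]
  refine Finset.sum_congr rfl fun i _ => ?_
  rw [← mul_add, Nat.add_sub_cancel' (hle i i.2)]

lemma exists_mem_Lev_of_mem_SS (hle : ∀ i < n, a i ≤ d) {p : ℕ × ℕ} (hp : p ∈ SS n d a) :
    ∃ t, p ∈ Lev d t := by
  obtain ⟨c, rfl⟩ := mem_SS_iff.1 hp
  exact ⟨∑ i, c i, fst_add_snd_sum_smul hle c⟩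

lemma fst_mem_S1_of_mem_SS {p : ℕ × ℕ} (hp : p ∈ SS n d a) : p.1 ∈ S1 n a := by
  have : SS n d a ⊆
      (AddSubmonoid.closure {x | ∃ i < n, a i = x}).comap (AddMonoidHom.fst ℕ ℕ) :=
    AddSubmonoid.closure_le.2 fun _ ⟨i, hi, hp⟩ =>
      AddSubmonoid.subset_closure ⟨i, hi, by simp [hp]⟩
  exact this hp

lemma snd_mem_S2_of_mem_SS {p : ℕ × ℕ} (hp : p ∈ SS n d a) : p.2 ∈ S2 n d a := by
  have : SS n d a ⊆
      (AddSubmonoid.closure {x | ∃ i < n, d - a i = x}).comap (AddMonoidHom.snd ℕ ℕ) :=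
    AddSubmonoid.closure_le.2 fun _ ⟨i, hi, hp⟩ =>
      AddSubmonoid.subset_closure ⟨i, hi, by simp [hp]⟩
  exact this hp

lemma exists_mem_SS_modEq_of_mem_G (hd : 0 < d) {p : ℤ × ℤ} (hp : p ∈ G n d a) :
    ∃ q ∈ SS n d a, (q.1 : ℤ) ≡ p.1 [ZMOD d] := by
  induction hp using AddSubgroup.closure_induction with
  | mem p hp =>
    obtain ⟨i, hi, rfl⟩ := hp
    exact ⟨(a i, d - a i), AddSubmonoid.subset_closure ⟨i, hi, rfl⟩, rfl⟩
  | zero => exact ⟨0, zero_mem _, rfl⟩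
  | add p p' _ _ ih ih' =>
    obtain ⟨q, hq, hqp⟩ := ih
    obtain ⟨q', hq', hqp'⟩ := ih'
    exact ⟨q + q', add_mem hq hq', hqp.add hqp'⟩
  | neg p _ ih =>
    obtain ⟨q, hq, hqp⟩ := ih
    have hneg : ((d - 1 : ℕ) : ℤ) ≡ -1 [ZMOD d] :=
      Int.modEq_iff_dvd.2 ⟨-1, by push_cast [Nat.cast_sub hd]; ring⟩
    refine ⟨(d - 1) • q, nsmul_mem hq _, ?_⟩
    simpa using hneg.mul hqp

lemma lt_of_sum_smul_mem_APS (hd : 0 < d) (hd0 : (d, 0) ∈ SS n d a) (h0d : (0, d) ∈ SS n d a)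
    {c : Fin n → ℕ} (hc : ∑ i, c i • ((a i, d - a i) : ℕ × ℕ) ∈ APS n d a) (i : Fin n) :
    c i < d := by
  by_contra! hci
  set q := ∑ j, (c - Pi.single i d : Fin n → ℕ) j • ((a j, d - a j) : ℕ × ℕ)
  have hq : q ∈ SS n d a := mem_SS_iff.2 ⟨_, rfl⟩
  have hsplit :
      ∑ j, c j • ((a j, d - a j) : ℕ × ℕ) = q + (a i • (d, 0) + (d - a i) • (0, d)) := by
    have hle : Pi.single i d ≤ c := fun j => by
      by_cases hj : j = i <;> simp [hj, hci]
    conv_lhs => rw [← tsub_add_cancel_of_le hle]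
    simp only [Pi.add_apply, add_smul, Finset.sum_add_distrib, Pi.single_apply, ite_smul,
      zero_smul, q]
    congr 1
    ext <;> simp [mul_comm]
  rcases Nat.eq_zero_or_pos (a i) with h0 | hpos
  · refine hc.2.1 ⟨q + (d - 1) • (0, d), add_mem hq (nsmul_mem h0d _), ?_⟩
    rw [hsplit, h0, zero_smul, zero_add, Nat.sub_zero, add_assoc, ← succ_nsmul,
      Nat.sub_add_cancel hd]
  · refine hc.2.2 ⟨q + ((a i - 1) • (d, 0) + (d - a i) • (0, d)),
      add_mem hq (add_mem (nsmul_mem hd0 _) (nsmul_mem h0d _)), ?_⟩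
    obtain ⟨k, hk⟩ := Nat.exists_eq_add_of_lt hpos
    rw [hsplit, hk, Nat.zero_add, Nat.add_sub_cancel, succ_nsmul]
    abel

lemma bddAbove_levels_APs (hle : ∀ i < n, a i ≤ d) (hd : 0 < d) (hd0 : (d, 0) ∈ SS n d a)
    (h0d : (0, d) ∈ SS n d a) : BddAbove {t | APs n d a t ≠ ∅} := by
  refine ⟨n * d, fun t ht => ?_⟩
  obtain ⟨p, hpAP, hpt⟩ := Set.nonempty_iff_ne_empty.2 ht
  obtain ⟨c, rfl⟩ := mem_SS_iff.1 hpAP.1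
  have hc := lt_of_sum_smul_mem_APS hd hd0 h0d hpAP
  have hlev : t * d = (∑ i, c i) * d := hpt.symm.trans (fst_add_snd_sum_smul hle c)
  calc t = ∑ i, c i := Nat.eq_of_mul_eq_mul_right hd hlev
    _ ≤ ∑ _i : Fin n, d := Finset.sum_le_sum fun i _ => (hc i).le
    _ = n * d := by simp

lemma mem_APS_of_forall_le (hd : 0 < d) {x : ℤ} {p : ℕ × ℕ} (hp : p ∈ SS n d a)
    (hpx : (p.1 : ℤ) ≡ x [ZMOD d])
    (hmin : ∀ q ∈ SS n d a, (q.1 : ℤ) ≡ x [ZMOD d] → p.1 + p.2 ≤ q.1 + q.2) :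
    p ∈ APS n d a := by
  refine ⟨hp, ?_, ?_⟩
  · rintro ⟨q, hq, rfl⟩
    have := hmin q hq (by simpa using hpx)
    simp only [Prod.fst_add, Prod.snd_add] at this
    omega
  · rintro ⟨q, hq, rfl⟩
    have := hmin q hq ((Int.add_modEq_right (n := (d : ℤ))).symm.trans (by simpa using hpx))
    simp only [Prod.fst_add, Prod.snd_add] at this
    omega

lemma exists_mem_APS_modEq (hd : 0 < d) {x : ℤ}
    (h : ∃ q ∈ SS n d a, (q.1 : ℤ) ≡ x [ZMOD d]) :
    ∃ p ∈ APS n d a, (p.1 : ℤ) ≡ x [ZMOD d] := by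
  classical
  have hex : ∃ m, ∃ q ∈ SS n d a, (q.1 : ℤ) ≡ x [ZMOD d] ∧ q.1 + q.2 = m :=
    let ⟨q, hq, hqx⟩ := h; ⟨_, q, hq, hqx, rfl⟩
  obtain ⟨p, hp, hpx, hpm⟩ := Nat.find_spec hex
  refine ⟨p, mem_APS_of_forall_le hd hp hpx fun q hq hqx => ?_, hpx⟩
  exact hpm ▸ Nat.find_min' hex ⟨q, hq, hqx, rfl⟩

theorem mAP_ge_of_gap_general (n d : ℕ) (a : ℕ → ℕ)
    (hn : 4 ≤ n)
    (ha0 : a 0 = 0)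
    (had : a (n - 1) = d)
    (hmono : ∀ i j, i < j → j ≤ n - 1 → a i < a j)
    (x y s : ℤ)
    (hG : (x, y) ∈ G n d a)
    (hx : x ∉ S1Z n a)
    (hy : y ∉ S2Z n d a)
    (hs : x + y = s * d) :
    (∃ s' : ℕ, s + 2 ≤ (s' : ℤ) ∧ APs n d a s' ≠ ∅)
      ∧ s + 2 ≤ (mAP n d a : ℤ) := by
  have hd : 0 < d := ha0 ▸ had ▸ hmono 0 (n - 1) (by omega) le_rfl
  have hle : ∀ i < n, a i ≤ d := fun i hi => by
    rcases Nat.lt_or_ge i (n - 1) with h | h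
    · exact had ▸ (hmono i (n - 1) h le_rfl).le
    · rw [show i = n - 1 by omega, had]
  have hd0 : (d, 0) ∈ SS n d a := AddSubmonoid.subset_closure ⟨n - 1, by omega, by simp [had]⟩
  have h0d : (0, d) ∈ SS n d a := AddSubmonoid.subset_closure ⟨0, by omega, by simp [ha0]⟩
  obtain ⟨p, hpAP, hpx⟩ := exists_mem_APS_modEq hd (exists_mem_SS_modEq_of_mem_G hd hG)
  obtain ⟨t, ht⟩ := exists_mem_Lev_of_mem_SS hle hpAP.1
  have hlev : (p.1 : ℤ) + p.2 = t * d := by exact_mod_cast ht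
  have hpy : (p.2 : ℤ) ≡ y [ZMOD d] := by
    obtain ⟨k, hk⟩ := hpx.dvd
    exact Int.modEq_iff_dvd.2 ⟨s - t - k, by linear_combination hs - hk - hlev⟩
  have hux : x + d ≤ p.1 := add_le_of_modEq_of_notMem (fst_mem_S1_of_mem_SS hd0)
    (fst_mem_S1_of_mem_SS hpAP.1) hx hpx
  have hvy : y + d ≤ p.2 := add_le_of_modEq_of_notMem (snd_mem_S2_of_mem_SS h0d)
    (snd_mem_S2_of_mem_SS hpAP.1) hy hpy
  have hst : s + 2 ≤ t :=
    le_of_mul_le_mul_right (a := (d : ℤ)) (by linarith) (by exact_mod_cast hd)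
  have hAP : APs n d a t ≠ ∅ := Set.nonempty_iff_ne_empty.1 ⟨p, hpAP, ht⟩
  exact ⟨⟨t, hst, hAP⟩,
    hst.trans (by exact_mod_cast le_csSup (bddAbove_levels_APs hle hd hd0 h0d) hAP)⟩

/-- If `(x,y) ∈ G` with `x ∈ ℤ \ S₁`, `y ∈ ℤ \ S₂` and `x + y = sd` for an integer `s`,
then there is an integer `s' ≥ s + 2` with `AP_{s'} ≠ ∅`; in particular
`m(AP_S) ≥ s + 2`. -/
theorem mAP_ge_of_gap (n d : ℕ) (a : ℕ → ℕ)
    (hn : 4 ≤ n)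
    (ha0 : a 0 = 0)
    (had : a (n - 1) = d)
    (hmono : ∀ i j, i < j → j ≤ n - 1 → a i < a j)
    (hgcd : (Finset.Icc 1 (n - 1)).gcd a = 1)
    (x y s : ℤ)
    (hG : (x, y) ∈ G n d a)
    (hx : x ∉ S1Z n a)
    (hy : y ∉ S2Z n d a)
    (hs : x + y = s * d) :
    (∃ s' : ℕ, s + 2 ≤ (s' : ℤ) ∧ APs n d a s' ≠ ∅)
      ∧ s + 2 ≤ (mAP n d a : ℤ) :=
  mAP_ge_of_gap_general n d a hn ha0 had hmono x y s hG hx hy hs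

end SumsetsCurve
end

section
/- Suppose the set T = {s ∈ ℤ : there exists (x,y) ∈ G with x ∈ ℤ ∖ S₁, y ∈ ℤ ∖ S₂ and x + y = sd} is nonempty, and let t be its maximum (T is bounded above since x ≤ F(S₁) and y ≤ F(S₂) for all such (x,y)). If E_{s+1} = ∅ for all s ≥ t + 2 (i.e., t + 2 > m(E_S), which holds in particular whenever E_S = ∅), then m(AP_S) = t + 2. -/
open scoped BigOperators

namespace SumsetsCurve

/-!
By maximality of `t`, every point of `G` on a level `s > t` has its first coordinate in `S₁`
or its second one in `S₂`; this applies to the shifts of points of `S` and `G` by `±(d, 0)`,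
`±(0, d)`, which stay in `G`. As `E_{s+1} = ∅` for `s ≥ t + 2`, a point `p` of level at
least `t + 1` with `p + (d, 0), p + (0, d) ∈ S` lies in `S`; descending along `(0, d)` or `(d, 0)`
with this rule shows that on these levels `S` already contains every point `(x, y)` with
`x ∈ S₁`, `y ∈ S₂`, and every `p` with `p + (d, 0) ∈ S` and `p.1 ∈ S₁` (and symmetrically).
A double gap `(u, v)` on level `t` then gives `(u + d, v + d) ∈ AP_{t+2}`, whereas for
`p ∈ AP_s` with `s > t + 2` the point `p - (d, d)` has a coordinate in `S₁` or `S₂`, and descent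
puts `p - (d, 0)` or `p - (0, d)` into `S`.
-/

/-- No point `q + (d, d)` with `L ≤ q.1 + q.2` is exceptional for `M`. -/
def NoExceptionalAbove (M : AddSubmonoid (ℕ × ℕ)) (d L : ℕ) : Prop :=
  ∀ x y, L ≤ x + y → (x + d, y) ∈ M → (x, y + d) ∈ M → (x, y) ∈ M

section Descent

variable {M : AddSubmonoid (ℕ × ℕ)} {d L : ℕ}

theorem exists_mem_add_mul_snd (h0d : ((0 : ℕ), d) ∈ M) (hmod : ∀ p ∈ M, d ∣ p.1 + p.2)
    {x y : ℕ} (hx : x ∈ M.map (AddMonoidHom.fst ℕ ℕ)) (hxy : d ∣ x + y) :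
    ∃ k : ℕ, (x, y + k * d) ∈ M := by
  obtain ⟨⟨x, y'⟩, hp, rfl⟩ := AddSubmonoid.mem_map.1 hx
  have hxy' : d ∣ x + y' := hmod _ hp
  rcases le_total y y' with h | h
  · obtain ⟨k, hk⟩ : d ∣ y' - y := by
      simpa [show x + y' - (x + y) = y' - y by omega] using Nat.dvd_sub hxy' hxy
    exact ⟨k, by rwa [show y + k * d = y' by rw [mul_comm]; omega]⟩
  · obtain ⟨k, hk⟩ : d ∣ y - y' := by
      simpa [show x + y - (x + y') = y - y' by omega] using Nat.dvd_sub hxy hxy'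
    refine ⟨0, ?_⟩
    convert M.add_mem hp (M.nsmul_mem h0d k) using 1
    ext <;> simp [mul_comm]
    omega

theorem NoExceptionalAbove.mem_of_add_fst_mem (hE : NoExceptionalAbove M d L)
    (h0d : ((0 : ℕ), d) ∈ M) (hmod : ∀ p ∈ M, d ∣ p.1 + p.2) {x y : ℕ}
    (hx : x ∈ M.map (AddMonoidHom.fst ℕ ℕ)) (hL : L ≤ x + y) (hxy : (x + d, y) ∈ M) :
    (x, y) ∈ M := by
  have hdvd : d ∣ x + y :=
    (Nat.dvd_add_right (dvd_refl d)).1 (by simpa [add_comm, add_left_comm] using hmod _ hxy)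
  obtain ⟨k, hk⟩ := exists_mem_add_mul_snd h0d hmod hx hdvd
  induction k with
  | zero => simpa using hk
  | succ k ih =>
    refine ih (hE x (y + k * d) (hL.trans (by omega)) ?_ (by simpa [add_mul, add_assoc] using hk))
    convert M.add_mem hxy (M.nsmul_mem h0d k) using 1
    ext <;> simp [mul_comm]

theorem NoExceptionalAbove.comap_swap (hE : NoExceptionalAbove M d L) :
    NoExceptionalAbove (M.comap (AddEquiv.prodComm : ℕ × ℕ ≃+ ℕ × ℕ).toAddMonoidHom) d L :=
  fun x y hL hx hy => hE y x (by omega) hy hx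

theorem NoExceptionalAbove.mem_of_add_snd_mem (hE : NoExceptionalAbove M d L)
    (hd0 : (d, (0 : ℕ)) ∈ M) (hmod : ∀ p ∈ M, d ∣ p.1 + p.2) {x y : ℕ}
    (hy : y ∈ M.map (AddMonoidHom.snd ℕ ℕ)) (hL : L ≤ x + y) (hxy : (x, y + d) ∈ M) :
    (x, y) ∈ M := by
  obtain ⟨p, hp, rfl⟩ := AddSubmonoid.mem_map.1 hy
  exact hE.comap_swap.mem_of_add_fst_mem hd0 (fun q hq => by simpa [add_comm] using hmod _ hq)
    ⟨p.swap, hp, rfl⟩ (by omega) hxy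

theorem NoExceptionalAbove.mem_of_mem_map_fst_of_mem_map_snd (hE : NoExceptionalAbove M d L)
    (h0d : ((0 : ℕ), d) ∈ M) (hd0 : (d, (0 : ℕ)) ∈ M) (hmod : ∀ p ∈ M, d ∣ p.1 + p.2)
    {x y : ℕ} (hx : x ∈ M.map (AddMonoidHom.fst ℕ ℕ)) (hy : y ∈ M.map (AddMonoidHom.snd ℕ ℕ))
    (hxy : d ∣ x + y) (hL : L ≤ x + y) : (x, y) ∈ M := by
  obtain ⟨k, hk⟩ := exists_mem_add_mul_snd h0d hmod hx hxy
  induction k with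
  | zero => simpa using hk
  | succ k ih =>
    refine ih (hE.mem_of_add_snd_mem hd0 hmod ?_ (hL.trans (by omega))
      (by simpa [add_mul, add_assoc] using hk))
    obtain ⟨p, hp, rfl⟩ := AddSubmonoid.mem_map.1 hy
    exact ⟨p + k • (0, d), M.add_mem hp (M.nsmul_mem h0d k), by simp [mul_comm]⟩

end Descent

theorem toNat_mul_le_of_le {t k : ℤ} {d m : ℕ} (h : t ≤ k) (hm : (m : ℤ) = k * d) :
    t.toNat * d ≤ m := by
  rcases le_or_gt t 0 with ht | ht
  · simp [Int.toNat_eq_zero.2 ht]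
  · zify
    rw [Int.toNat_of_nonneg ht.le, hm]
    exact mul_le_mul_of_nonneg_right h (by positivity)

/-- `SS n d a` is the carrier of this submonoid. -/
def SSMonoid (n d : ℕ) (a : ℕ → ℕ) : AddSubmonoid (ℕ × ℕ) :=
  AddSubmonoid.closure {p : ℕ × ℕ | ∃ i < n, p = (a i, d - a i)}

/-- The set `T` of the paper. -/
def gapLevels (n d : ℕ) (a : ℕ → ℕ) : Set ℤ :=
  {s : ℤ | ∃ p : ℤ × ℤ, p ∈ G n d a ∧ p.1 ∉ S1Z n a ∧ p.2 ∉ S2Z n d a ∧ p.1 + p.2 = s * d}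

section Homogeneous

variable {n d : ℕ} {a : ℕ → ℕ}

theorem mem_S1_iff {x : ℕ} : x ∈ S1 n a ↔ x ∈ (SSMonoid n d a).map (AddMonoidHom.fst ℕ ℕ) := by
  have hgen : Prod.fst '' {p : ℕ × ℕ | ∃ i < n, p = (a i, d - a i)} = {x | ∃ i < n, a i = x} := by
    ext; simp [eq_comm]
  rw [SSMonoid, AddMonoidHom.map_mclosure, AddMonoidHom.coe_fst, hgen]
  rfl

theorem mem_S2_iff {y : ℕ} :
    y ∈ S2 n d a ↔ y ∈ (SSMonoid n d a).map (AddMonoidHom.snd ℕ ℕ) := by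
  have hgen : Prod.snd '' {p : ℕ × ℕ | ∃ i < n, p = (a i, d - a i)} =
      {y | ∃ i < n, d - a i = y} := by
    ext; simp [eq_comm]
  rw [SSMonoid, AddMonoidHom.map_mclosure, AddMonoidHom.coe_snd, hgen]
  rfl

theorem dvd_add_of_mem_SSMonoid (hle : ∀ i < n, a i ≤ d) {p : ℕ × ℕ}
    (hp : p ∈ SSMonoid n d a) : d ∣ p.1 + p.2 := by
  induction hp using AddSubmonoid.closure_induction with
  | mem q hq =>
    obtain ⟨i, hi, rfl⟩ := hq
    simp [Nat.add_sub_cancel' (hle i hi)]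
  | zero => simp
  | add p q _ _ hp hq => simpa [add_add_add_comm] using dvd_add hp hq

theorem cast_mem_G (hle : ∀ i < n, a i ≤ d) {p : ℕ × ℕ} (hp : p ∈ SSMonoid n d a) :
    ((p.1 : ℤ), (p.2 : ℤ)) ∈ G n d a := by
  induction hp using AddSubmonoid.closure_induction with
  | mem q hq =>
    obtain ⟨i, hi, rfl⟩ := hq
    exact AddSubgroup.subset_closure ⟨i, hi, by simp [Nat.cast_sub (hle i hi)]⟩
  | zero => exact zero_mem _
  | add p q _ _ hp hq => simpa using add_mem hp hq

theorem noExceptionalAbove_SSMonoid (hd : 0 < d) (hle : ∀ i < n, a i ≤ d)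
    (h0d : ((0 : ℕ), d) ∈ SSMonoid n d a) {t : ℤ}
    (hE : ∀ s : ℕ, t + 2 ≤ (s : ℤ) → Es n d a (s + 1) = ∅) :
    NoExceptionalAbove (SSMonoid n d a) d ((t + 1).toNat * d) := by
  intro x y hL hx hy
  by_contra hxy
  obtain ⟨s, hs⟩ : d ∣ x + y := (Nat.dvd_add_right (dvd_refl d)).1
    (by simpa [add_comm, add_left_comm] using dvd_add_of_mem_SSMonoid hle hx)
  have hts : t + 1 ≤ s :=
    Int.toNat_le.1 (Nat.le_of_mul_le_mul_right (hL.trans_eq (hs.trans (mul_comm d s))) hd)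
  refine (Set.eq_empty_iff_forall_notMem.1 (hE (s + 1) (by push_cast; omega))) (x + d, y + d)
    ⟨⟨add_mem hx h0d, ⟨_, hx, rfl⟩, ⟨_, hy, rfl⟩, ?_⟩, ?_⟩
  · rintro ⟨⟨q1, q2⟩, hq, he⟩
    simp only [Prod.mk_add_mk, Prod.mk.injEq] at he
    exact hxy (by rwa [show x = q1 by omega, show y = q2 by omega])
  · show x + d + (y + d) = (s + 1 + 1) * d
    linarith

theorem mem_S1Z_or_mem_S2Z {t k u v : ℤ} (htmax : ∀ s ∈ gapLevels n d a, s ≤ t) (hk : t < k)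
    (hG : (u, v) ∈ G n d a) (huv : u + v = k * d) : u ∈ S1Z n a ∨ v ∈ S2Z n d a := by
  by_contra! h
  exact hk.not_ge (htmax k ⟨(u, v), hG, h.1, h.2, huv⟩)

theorem exists_APs_nonempty (hd : 0 < d) (hle : ∀ i < n, a i ≤ d)
    (h0d : ((0 : ℕ), d) ∈ SSMonoid n d a) (hd0 : (d, (0 : ℕ)) ∈ SSMonoid n d a) {t : ℤ}
    (hE : NoExceptionalAbove (SSMonoid n d a) d ((t + 1).toNat * d))
    (htmem : t ∈ gapLevels n d a) (htmax : ∀ s ∈ gapLevels n d a, s ≤ t) :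
    ∃ N : ℕ, (N : ℤ) = t + 2 ∧ (APs n d a N).Nonempty := by
  obtain ⟨⟨u, v⟩, hG, hu, hv, huv⟩ := htmem
  simp only at hu hv huv
  have hG₁ : (u + d, v) ∈ G n d a := by
    convert add_mem hG (by simpa using cast_mem_G hle hd0) using 1; simp
  have hG₂ : (u, v + d) ∈ G n d a := by
    convert add_mem hG (by simpa using cast_mem_G hle h0d) using 1; simp
  obtain ⟨X, hX, hXu⟩ : u + d ∈ S1Z n a :=
    (mem_S1Z_or_mem_S2Z htmax (lt_add_one t) hG₁ (by linarith)).resolve_right hv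
  obtain ⟨Y, hY, hYv⟩ : v + d ∈ S2Z n d a :=
    (mem_S1Z_or_mem_S2Z htmax (lt_add_one t) hG₂ (by linarith)).resolve_left hu
  have hXY : ((X + Y : ℕ) : ℤ) = (t + 2) * d := by push_cast; linarith
  have ht : 0 ≤ t + 2 :=
    nonneg_of_mul_nonneg_left (hXY ▸ Int.natCast_nonneg _) (by exact_mod_cast hd)
  have hN : ((t + 2).toNat : ℤ) = t + 2 := Int.toNat_of_nonneg ht
  have hXYN : X + Y = (t + 2).toNat * d := by rw [← hN] at hXY; exact_mod_cast hXY
  refine ⟨(t + 2).toNat, hN, (X, Y), ⟨?_, ?_, ?_⟩, hXYN⟩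
  · exact hE.mem_of_mem_map_fst_of_mem_map_snd h0d hd0 (fun p => dvd_add_of_mem_SSMonoid hle)
      (mem_S1_iff.1 hX) (mem_S2_iff.1 hY) (hXYN ▸ dvd_mul_left d _)
      (toNat_mul_le_of_le (by omega) hXY)
  · rintro ⟨⟨q1, q2⟩, hq, he⟩
    simp only [Prod.mk_add_mk, Prod.mk.injEq] at he
    exact hv ⟨q2, mem_S2_iff.2 ⟨_, hq, rfl⟩, by omega⟩
  · rintro ⟨⟨q1, q2⟩, hq, he⟩
    simp only [Prod.mk_add_mk, Prod.mk.injEq] at he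
    exact hu ⟨q1, mem_S1_iff.2 ⟨_, hq, rfl⟩, by omega⟩

theorem le_of_APs_nonempty (hle : ∀ i < n, a i ≤ d)
    (h0d : ((0 : ℕ), d) ∈ SSMonoid n d a) (hd0 : (d, (0 : ℕ)) ∈ SSMonoid n d a) {t : ℤ}
    (hE : NoExceptionalAbove (SSMonoid n d a) d ((t + 1).toNat * d))
    (htmax : ∀ s ∈ gapLevels n d a, s ≤ t) {s : ℕ} (hs : (APs n d a s).Nonempty) :
    (s : ℤ) ≤ t + 2 := by
  by_contra! hst
  obtain ⟨⟨x, y⟩, ⟨hp, hnot0d, hnotd0⟩, hlev⟩ := hs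
  have hlev : (x : ℤ) + y = s * d := by exact_mod_cast hlev
  have hmod : ∀ p ∈ SSMonoid n d a, d ∣ p.1 + p.2 := fun p => dvd_add_of_mem_SSMonoid hle
  have hddG : ((d : ℤ), (d : ℤ)) ∈ G n d a := by simpa using cast_mem_G hle (add_mem hd0 h0d)
  have hG : ((x : ℤ) - d, (y : ℤ) - d) ∈ G n d a := by
    simpa only [Prod.mk_sub_mk] using sub_mem (cast_mem_G hle hp) hddG
  rcases mem_S1Z_or_mem_S2Z htmax (k := s - 2) (by omega) hG (by linarith)
    with ⟨z, hz, hzx⟩ | ⟨z, hz, hzy⟩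
  · obtain rfl : x = z + d := by omega
    refine hnotd0 ⟨(z, y), hE.mem_of_add_fst_mem h0d hmod (mem_S1_iff.1 hz)
      (toNat_mul_le_of_le (k := s - 1) (by omega) (by push_cast at hlev ⊢; linarith)) hp, rfl⟩
  · obtain rfl : y = z + d := by omega
    refine hnot0d ⟨(x, z), hE.mem_of_add_snd_mem hd0 hmod (mem_S2_iff.1 hz)
      (toNat_mul_le_of_le (k := s - 1) (by omega) (by push_cast at hlev ⊢; linarith)) hp, rfl⟩

end Homogeneous

theorem mAP_eq_of_max_gap_level_general (n d : ℕ) (a : ℕ → ℕ)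
    (hn : 4 ≤ n)
    (ha0 : a 0 = 0)
    (had : a (n - 1) = d)
    (hmono : ∀ i j, i < j → j ≤ n - 1 → a i < a j)
    (t : ℤ)
    (htmem : t ∈ {s : ℤ | ∃ p : ℤ × ℤ, p ∈ G n d a ∧ p.1 ∉ S1Z n a
        ∧ p.2 ∉ S2Z n d a ∧ p.1 + p.2 = s * d})
    (htmax : ∀ s ∈ {s : ℤ | ∃ p : ℤ × ℤ, p ∈ G n d a ∧ p.1 ∉ S1Z n a
        ∧ p.2 ∉ S2Z n d a ∧ p.1 + p.2 = s * d}, s ≤ t)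
    (hE : ∀ s : ℕ, t + 2 ≤ (s : ℤ) → Es n d a (s + 1) = ∅) :
    (mAP n d a : ℤ) = t + 2 := by
  have hd : 0 < d := by simpa [ha0, had] using hmono 0 (n - 1) (by omega) le_rfl
  have hle : ∀ i < n, a i ≤ d := fun i hi => by
    rcases (show i < n - 1 ∨ i = n - 1 by omega) with h | rfl
    · exact had ▸ (hmono i _ h le_rfl).le
    · exact had.le
  have h0d : ((0 : ℕ), d) ∈ SSMonoid n d a :=
    AddSubmonoid.subset_closure ⟨0, by omega, by simp [ha0]⟩
  have hd0 : (d, (0 : ℕ)) ∈ SSMonoid n d a :=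
    AddSubmonoid.subset_closure ⟨n - 1, by omega, by simp [had]⟩
  have hnoE := noExceptionalAbove_SSMonoid hd hle h0d hE
  obtain ⟨N, hN, hAP⟩ := exists_APs_nonempty hd hle h0d hd0 hnoE htmem htmax
  have hmax : IsGreatest {s | APs n d a s ≠ ∅} N :=
    ⟨hAP.ne_empty, fun s hs => by
      exact_mod_cast (le_of_APs_nonempty hle h0d hd0 hnoE htmax
        (Set.nonempty_iff_ne_empty.2 hs)).trans hN.ge⟩
  rw [mAP, hmax.csSup_eq, hN]

/-- Let `t` be the maximum of `T = {s ∈ ℤ : ∃ (x,y) ∈ G, x ∉ S₁, y ∉ S₂, x + y = sd}`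
(assumed nonempty with maximum `t`). If `E_{s+1} = ∅` for all `s ≥ t + 2`
(i.e., `t + 2 > m(E_S)`, which holds in particular when `E_S = ∅`), then
`m(AP_S) = t + 2`. -/
theorem mAP_eq_of_max_gap_level (n d : ℕ) (a : ℕ → ℕ)
    (hn : 4 ≤ n)
    (ha0 : a 0 = 0)
    (had : a (n - 1) = d)
    (hmono : ∀ i j, i < j → j ≤ n - 1 → a i < a j)
    (hgcd : (Finset.Icc 1 (n - 1)).gcd a = 1)
    (t : ℤ)
    (htmem : t ∈ {s : ℤ | ∃ p : ℤ × ℤ, p ∈ G n d a ∧ p.1 ∉ S1Z n a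
        ∧ p.2 ∉ S2Z n d a ∧ p.1 + p.2 = s * d})
    (htmax : ∀ s ∈ {s : ℤ | ∃ p : ℤ × ℤ, p ∈ G n d a ∧ p.1 ∉ S1Z n a
        ∧ p.2 ∉ S2Z n d a ∧ p.1 + p.2 = s * d}, s ≤ t)
    (hE : ∀ s : ℕ, t + 2 ≤ (s : ℤ) → Es n d a (s + 1) = ∅) :
    (mAP n d a : ℤ) = t + 2 :=
  mAP_eq_of_max_gap_level_general n d a hn ha0 had hmono t htmem htmax hE

end SumsetsCurve
end

section
/- One has ⌈(c₁+c₂)/d⌉ ≤ d − n + 1. -/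
open scoped BigOperators

namespace SumsetsCurve

/-!
Put `B = {a₁, …, a_{n-2}} ⊆ (0, d)`. For a residue `u` mod `d` let `w(u)` be the least element of
`⟨B⟩` congruent to `u` and `k(u) = ⌊w(u) / d⌋` its Kunz coordinate; `k'` is the same for `d - B`.
Every `m ≥ d · max k` is `w(m) + (multiple of d)`, so `c₁ ≤ d · max k` and `c₂ ≤ d · max k'`, and it
suffices to show `max k + max k' + |B| < d` by counting residues. Let `k'(v)` be maximal and take a
shortest list `l` of elements of `B` summing to `w(-v)`. Its prefixes are again shortest
representations of Apéry elements, so the prefix sums of lengths `2, …, |l|` lie in distinct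
classes, different from `0` and from `B`, all with Kunz coordinate at most `k(-v)`. Since `k` grows
by at most one along prefixes, every value up to `max k` is attained, giving `max k - k(-v)` more
classes. Finally, replacing each summand `b` of `l` by `d - b` represents `v`, which shows
`k(-v) + k'(v) < |l|`.
-/

section Apery

variable {d : ℕ} {B : Set ℕ}

def CoversResidues (d : ℕ) (B : Set ℕ) : Prop :=
  ∀ u : ZMod d, ∃ s ∈ AddSubmonoid.closure B, (s : ZMod d) = u

/-- The element of the Apéry set of `⟨B ∪ {d}⟩` with respect to `d` in the class `u`
(`0` if `⟨B⟩` misses the class). -/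
noncomputable def aperyElt (d : ℕ) (B : Set ℕ) (u : ZMod d) : ℕ :=
  sInf {s | s ∈ AddSubmonoid.closure B ∧ (s : ZMod d) = u}

/-- The number of gaps of `⟨B ∪ {d}⟩` in the class `u`. -/
noncomputable def kunzCoord (d : ℕ) (B : Set ℕ) (u : ZMod d) : ℕ :=
  aperyElt d B u / d

theorem aperyElt_le {s : ℕ} (hs : s ∈ AddSubmonoid.closure B) : aperyElt d B s ≤ s :=
  Nat.sInf_le ⟨hs, rfl⟩

theorem aperyElt_spec_of_mem {s : ℕ} (hs : s ∈ AddSubmonoid.closure B) :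
    aperyElt d B s ∈ AddSubmonoid.closure B ∧ (aperyElt d B s : ZMod d) = s :=
  Nat.sInf_mem (s := {t | t ∈ AddSubmonoid.closure B ∧ (t : ZMod d) = s}) ⟨s, hs, rfl⟩

theorem CoversResidues.aperyElt_spec (h : CoversResidues d B) (u : ZMod d) :
    aperyElt d B u ∈ AddSubmonoid.closure B ∧ (aperyElt d B u : ZMod d) = u := by
  obtain ⟨s, hs, rfl⟩ := h u
  exact aperyElt_spec_of_mem hs

theorem aperyElt_zero : aperyElt d B 0 = 0 := by
  simpa using aperyElt_le (d := d) (zero_mem (AddSubmonoid.closure B))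

theorem kunzCoord_zero : kunzCoord d B 0 = 0 := by
  simp [kunzCoord, aperyElt_zero]

theorem aperyElt_eq_left_of_add {x y : ℕ} (hx : x ∈ AddSubmonoid.closure B)
    (hy : y ∈ AddSubmonoid.closure B)
    (h : aperyElt d B ((x + y : ℕ) : ZMod d) = x + y) : aperyElt d B x = x := by
  obtain ⟨hw, hwx⟩ := aperyElt_spec_of_mem (d := d) hx
  have : aperyElt d B ((x + y : ℕ) : ZMod d) ≤ aperyElt d B x + y := by
    simpa [hwx] using aperyElt_le (d := d) (add_mem hw hy)
  exact le_antisymm (aperyElt_le hx) (by omega)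

theorem coversResidues_of_setGcd [NeZero d] (h : Nat.setGcd (insert d B) = 1) :
    CoversResidues d B := by
  obtain ⟨N, hN⟩ := Nat.exists_mem_closure_of_ge (insert d B)
  intro u
  have hmem : N * d + u.val ∈ AddSubmonoid.closure (insert d B) :=
    hN _ (Nat.le_add_right_of_le (Nat.le_mul_of_pos_right N (NeZero.pos d))) (h ▸ one_dvd _)
  rw [Set.insert_eq, AddSubmonoid.closure_union, AddSubmonoid.mem_sup] at hmem
  obtain ⟨_, hy, s, hs, hys⟩ := hmem
  obtain ⟨k, rfl⟩ := AddSubmonoid.mem_closure_singleton.mp hy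
  refine ⟨s, hs, ?_⟩
  simpa using congrArg (Nat.cast : ℕ → ZMod d) hys

theorem setGcd_insert_image_sub (hB : ∀ b ∈ B, b ≤ d) :
    Nat.setGcd (insert d ((d - ·) '' B)) = Nat.setGcd (insert d B) := by
  have hd : ∀ {T : Set ℕ}, Nat.setGcd (insert d T) ∣ d :=
    Nat.setGcd_dvd_of_mem (Set.mem_insert _ _)
  refine Nat.dvd_antisymm (Nat.dvd_setGcd_iff.mpr ?_) (Nat.dvd_setGcd_iff.mpr ?_)
  · rintro m (rfl | hm)
    · exact hd
    · have := Nat.setGcd_dvd_of_mem (Set.mem_insert_of_mem d (Set.mem_image_of_mem (d - ·) hm))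
      exact Nat.sub_sub_self (hB m hm) ▸ Nat.dvd_sub hd this
  · rintro m (rfl | ⟨b, hb, rfl⟩)
    · exact hd
    · exact Nat.dvd_sub hd (Nat.setGcd_dvd_of_mem (Set.mem_insert_of_mem d hb))

end Apery

section MinRep

variable {d : ℕ} {B : Set ℕ} {l : List ℕ}

theorem list_sum_mem_closure (hl : ∀ x ∈ l, x ∈ B) : l.sum ∈ AddSubmonoid.closure B :=
  AddSubmonoid.list_sum_mem _ fun x hx => AddSubmonoid.subset_closure (hl x hx)

structure IsMinRep (d : ℕ) (B : Set ℕ) (l : List ℕ) : Prop where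
  mem : ∀ x ∈ l, x ∈ B
  aperyElt_sum : aperyElt d B l.sum = l.sum
  length_le : ∀ q : List ℕ, (∀ x ∈ q, x ∈ B) → q.sum = l.sum → l.length ≤ q.length

theorem IsMinRep.nil : IsMinRep d B [] :=
  ⟨by simp, by simp [aperyElt_zero], by simp⟩

theorem IsMinRep.singleton {b : ℕ} (hb : b ∈ B) (hb0 : 0 < b) (hbd : b < d) :
    IsMinRep d B [b] := by
  have hmem := AddSubmonoid.subset_closure (M := ℕ) hb
  have hle := aperyElt_le (d := d) hmem
  have hmod := (ZMod.natCast_eq_natCast_iff' _ _ d).mp (aperyElt_spec_of_mem (d := d) hmem).2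
  refine ⟨by simpa using hb, ?_, fun q _ hq => ?_⟩
  · rw [Nat.mod_eq_of_lt (hle.trans_lt hbd), Nat.mod_eq_of_lt hbd] at hmod
    simpa using hmod
  · cases q
    · simp at hq; omega
    · simp

theorem IsMinRep.take (hl : IsMinRep d B l) (k : ℕ) : IsMinRep d B (l.take k) := by
  obtain ⟨hlB, hA, hmin⟩ := hl
  have htake : ∀ x ∈ l.take k, x ∈ B := fun x hx => hlB x (List.mem_of_mem_take hx)
  have hdrop : ∀ x ∈ l.drop k, x ∈ B := fun x hx => hlB x (List.mem_of_mem_drop hx)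
  have hsplit := List.sum_take_add_sum_drop l k
  refine ⟨htake, aperyElt_eq_left_of_add (list_sum_mem_closure htake)
    (list_sum_mem_closure hdrop) (by rwa [hsplit]), fun q hq hqs => ?_⟩
  have := hmin (q ++ l.drop k) (by simpa [or_imp, forall_and] using ⟨hq, hdrop⟩)
    (by rw [List.sum_append, hqs, hsplit])
  simp only [List.length_append, List.length_drop, List.length_take] at this ⊢
  omega

theorem IsMinRep.sum_eq_of_cast_eq {q : List ℕ} (hl : IsMinRep d B l) (hq : IsMinRep d B q)
    (h : (l.sum : ZMod d) = q.sum) : l.sum = q.sum := by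
  rw [← hl.aperyElt_sum, h, hq.aperyElt_sum]

theorem IsMinRep.length_eq_of_cast_eq {q : List ℕ} (hl : IsMinRep d B l) (hq : IsMinRep d B q)
    (h : (l.sum : ZMod d) = q.sum) : l.length = q.length :=
  le_antisymm (hl.length_le q hq.mem (hl.sum_eq_of_cast_eq hq h).symm)
    (hq.length_le l hl.mem (hl.sum_eq_of_cast_eq hq h))

theorem IsMinRep.kunzCoord_eq (hl : IsMinRep d B l) : kunzCoord d B l.sum = l.sum / d := by
  rw [kunzCoord, hl.aperyElt_sum]

theorem IsMinRep.injOn_cast_sum_take (hl : IsMinRep d B l) :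
    Set.InjOn (fun k => ((l.take k).sum : ZMod d)) (Set.Iic l.length) := by
  intro i hi j hj hij
  have := (hl.take i).length_eq_of_cast_eq (hl.take j) hij
  simp only [List.length_take, Set.mem_Iic] at this hi hj
  omega

theorem CoversResidues.exists_isMinRep (h : CoversResidues d B) (u : ZMod d) :
    ∃ l, IsMinRep d B l ∧ (l.sum : ZMod d) = u := by
  classical
  obtain ⟨hmem, hcast⟩ := h.aperyElt_spec u
  have hex : ∃ k, ∃ l : List ℕ, (∀ x ∈ l, x ∈ B) ∧ l.sum = aperyElt d B u ∧ l.length = k := by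
    obtain ⟨l, hl, hs⟩ := AddSubmonoid.exists_list_of_mem_closure hmem
    exact ⟨_, l, hl, hs, rfl⟩
  obtain ⟨l, hl, hs, hlen⟩ := Nat.find_spec hex
  refine ⟨l, ⟨hl, by rw [hs, hcast], fun q hq hqs => ?_⟩, by rw [hs, hcast]⟩
  rw [hlen]
  exact Nat.find_min' hex ⟨q, hq, hqs.trans hs, rfl⟩

end MinRep

theorem exists_le_apply_eq_of_step_le_one {f : ℕ → ℕ} (hf : ∀ k, f (k + 1) ≤ f k + 1)
    {N g : ℕ} (h0 : f 0 ≤ g) (hN : g ≤ f N) : ∃ k ≤ N, f k = g := by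
  induction N with
  | zero => exact ⟨0, le_rfl, le_antisymm h0 hN⟩
  | succ N ih =>
    by_cases hg : g ≤ f N
    · obtain ⟨k, hk, rfl⟩ := ih hg
      exact ⟨k, by omega, rfl⟩
    · exact ⟨N + 1, le_rfl, by have := hf N; omega⟩

theorem kunzCoord_neg_add_div_lt_length {d : ℕ} {B : Set ℕ} (hB : ∀ b ∈ B, b ≤ d) {l : List ℕ}
    (hl : ∀ x ∈ l, x ∈ B) (hz : (l.sum : ZMod d) ≠ 0) :
    kunzCoord d ((d - ·) '' B) (-(l.sum : ZMod d)) + l.sum / d < l.length := by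
  set l' := l.map (d - ·)
  have hsum : l'.sum + l.sum = l.length * d := calc
    l'.sum + l.sum = (l.map fun x => d - x + x).sum := by rw [List.sum_map_add, List.map_id']
    _ = (l.map fun _ => d).sum :=
      congrArg _ (List.map_congr_left fun x hx => Nat.sub_add_cancel (hB x (hl x hx)))
    _ = l.length * d := by simp
  have hmem : l'.sum ∈ AddSubmonoid.closure ((d - ·) '' B) :=
    list_sum_mem_closure fun x hx => by
      obtain ⟨b, hb, rfl⟩ := List.mem_map.mp hx
      exact Set.mem_image_of_mem _ (hl b hb)
  have hcast : (l'.sum : ZMod d) = -(l.sum : ZMod d) :=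
    eq_neg_of_add_eq_zero_left (by rw [← Nat.cast_add, hsum]; simp)
  have hle : kunzCoord d ((d - ·) '' B) (-(l.sum : ZMod d)) ≤ l'.sum / d :=
    hcast ▸ Nat.div_le_div_right (aperyElt_le hmem)
  have hmod : l.sum % d ≠ 0 := fun h =>
    hz ((ZMod.natCast_eq_zero_iff _ _).mpr (Nat.dvd_of_mod_eq_zero h))
  have hdiv : l'.sum / d + l.sum / d < l.length := by
    have h1 := Nat.div_add_mod l'.sum d
    have h2 := Nat.div_add_mod l.sum d
    refine Nat.lt_of_mul_lt_mul_left (a := d) ?_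
    rw [mul_add, Nat.mul_comm d l.length]
    omega
  omega

theorem card_insert_zero_image_natCast {d : ℕ} {B : Finset ℕ} (hB : ∀ b ∈ B, 0 < b ∧ b < d) :
    (insert 0 (B.image Nat.cast) : Finset (ZMod d)).card = B.card + 1 := by
  have hinj : Set.InjOn (Nat.cast : ℕ → ZMod d) B := fun x hx y hy h => by
    simpa [Nat.mod_eq_of_lt (hB x hx).2, Nat.mod_eq_of_lt (hB y hy).2] using
      (ZMod.natCast_eq_natCast_iff' x y d).mp h
  rw [Finset.card_insert_of_notMem, Finset.card_image_of_injOn hinj]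
  intro h
  obtain ⟨b, hb, hb0⟩ := Finset.mem_image.mp h
  have := Nat.le_of_dvd (hB b hb).1 ((ZMod.natCast_eq_zero_iff b d).mp hb0)
  have := (hB b hb).2
  omega

section KunzCoord

variable {d : ℕ} [NeZero d]

open Finset

theorem exists_kunzCoord_eq {B : Set ℕ} (hB : ∀ b ∈ B, b ≤ d) (hre : CoversResidues d B)
    {u : ZMod d} {g : ℕ} (hg : g ≤ kunzCoord d B u) : ∃ c, kunzCoord d B c = g := by
  obtain ⟨l, hl, rfl⟩ := hre.exists_isMinRep u
  have hstep : ∀ k, (l.take (k + 1)).sum / d ≤ (l.take k).sum / d + 1 := by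
    intro k
    rcases lt_or_ge k l.length with hk | hk
    · rw [List.sum_take_succ l k hk, ← Nat.add_div_right _ (NeZero.pos d)]
      exact Nat.div_le_div_right (by have := hB _ (hl.mem _ (List.getElem_mem hk)); omega)
    · rw [List.take_of_length_le (by omega), List.take_of_length_le hk]
      omega
  obtain ⟨k, -, hk⟩ := exists_le_apply_eq_of_step_le_one (f := fun k => (l.take k).sum / d)
    (N := l.length) (g := g) hstep (by simp) (by simpa [← hl.kunzCoord_eq] using hg)
  exact ⟨_, (hl.take k).kunzCoord_eq.trans hk⟩

theorem card_add_length_le_card_filter {B : Finset ℕ} (hB : ∀ b ∈ B, 0 < b ∧ b < d)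
    {l : List ℕ} (hl : IsMinRep d B l) :
    B.card + 1 + (l.length - 1) ≤ #{c | kunzCoord d B c ≤ kunzCoord d B l.sum} := by
  classical
  set T0 : Finset (ZMod d) := insert 0 (B.image Nat.cast)
  set T1 : Finset (ZMod d) := (Icc 2 l.length).image fun k => ((l.take k).sum : ZMod d)
  have hT0 : ∀ c ∈ T0, ∃ q, IsMinRep d B q ∧ q.length ≤ 1 ∧ q.sum < d ∧ (q.sum : ZMod d) = c := by
    rintro c hc
    rcases mem_insert.mp hc with rfl | hc
    · exact ⟨[], .nil, by simp, by simpa using NeZero.pos d, by simp⟩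
    · obtain ⟨b, hb, rfl⟩ := mem_image.mp hc
      exact ⟨[b], .singleton hb (hB b hb).1 (hB b hb).2, by simp, by simpa using (hB b hb).2,
        by simp⟩
  have hcardT1 : T1.card = l.length - 1 := by
    rw [card_image_of_injOn (hl.injOn_cast_sum_take.mono fun k hk => (mem_Icc.mp hk).2),
      Nat.card_Icc]
    omega
  have hdisj : Disjoint T0 T1 := by
    rw [disjoint_right]
    intro c hc hc0
    obtain ⟨k, hk, rfl⟩ := mem_image.mp hc
    obtain ⟨q, hq, hqlen, -, hqc⟩ := hT0 _ hc0
    have := (hl.take k).length_eq_of_cast_eq hq hqc.symm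
    rw [mem_Icc] at hk
    rw [List.length_take] at this
    omega
  have hsub : T0 ∪ T1 ⊆ univ.filter fun c => kunzCoord d B c ≤ kunzCoord d B l.sum := by
    intro c hc
    rw [mem_filter]
    refine ⟨mem_univ c, ?_⟩
    rcases mem_union.mp hc with hc | hc
    · obtain ⟨q, hq, -, hqd, rfl⟩ := hT0 c hc
      rw [hq.kunzCoord_eq, Nat.div_eq_of_lt hqd]
      exact Nat.zero_le _
    · obtain ⟨k, -, rfl⟩ := mem_image.mp hc
      rw [(hl.take k).kunzCoord_eq, hl.kunzCoord_eq]
      exact Nat.div_le_div_right (List.sum_take_add_sum_drop l k ▸ Nat.le_add_right _ _)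
  calc B.card + 1 + (l.length - 1) = (T0 ∪ T1).card := by
        rw [card_union_of_disjoint hdisj, card_insert_zero_image_natCast hB, hcardT1]
    _ ≤ _ := card_le_card hsub

theorem sup_kunzCoord_sub_le_card_filter {B : Set ℕ} (hB : ∀ b ∈ B, b ≤ d)
    (hre : CoversResidues d B) (g : ℕ) :
    univ.sup (kunzCoord d B) - g ≤ #{c | ¬ kunzCoord d B c ≤ g} := by
  obtain ⟨u, -, hu⟩ := exists_mem_eq_sup univ univ_nonempty (kunzCoord d B)
  rw [← Nat.card_Ioc]
  refine card_le_card_of_surjOn (kunzCoord d B) fun k hk => ?_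
  rw [coe_Ioc, Set.mem_Ioc, hu] at hk
  obtain ⟨c, hc⟩ := exists_kunzCoord_eq hB hre hk.2
  exact ⟨c, by simpa [hc] using hk.1, hc⟩

theorem sup_kunzCoord_add_sup_kunzCoord_add_card_lt {B : Finset ℕ}
    (hB : ∀ b ∈ B, 0 < b ∧ b < d) (hre : CoversResidues d B) :
    univ.sup (kunzCoord d B) + univ.sup (kunzCoord d ((d - ·) '' B)) + B.card < d := by
  classical
  have hBd : ∀ b ∈ (B : Set ℕ), b ≤ d := fun b hb => (hB b hb).2.le
  obtain ⟨v, -, hv⟩ := exists_mem_eq_sup univ univ_nonempty (kunzCoord d ((d - ·) '' B))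
  obtain ⟨l, hl, hlv⟩ := hre.exists_isMinRep (-v)
  have hlow := card_add_length_le_card_filter hB hl
  have hhigh := sup_kunzCoord_sub_le_card_filter hBd hre (kunzCoord d B l.sum)
  have htotal := card_filter_add_card_filter_not (s := univ)
    fun c => kunzCoord d B c ≤ kunzCoord d B l.sum
  rw [card_univ, ZMod.card] at htotal
  by_cases hz : (l.sum : ZMod d) = 0
  · rw [hz, eq_comm, neg_eq_zero] at hlv
    rw [hz, kunzCoord_zero] at hlow hhigh htotal
    rw [hv, hlv, kunzCoord_zero]
    omega
  · have hdual := kunzCoord_neg_add_div_lt_length hBd hl.mem hz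
    rw [hlv, neg_neg, ← hv, ← hl.kunzCoord_eq] at hdual
    omega

theorem conductor_numSG_le {B G : Set ℕ} (hre : CoversResidues d B) (hBG : B ⊆ G) (hdG : d ∈ G) :
    conductor (numSG G) ≤ d * univ.sup (kunzCoord d B) := by
  refine Nat.sInf_le fun m hm => ?_
  obtain ⟨hw, hwm⟩ := hre.aperyElt_spec m
  set w := aperyElt d B m
  have hmod : w % d = m % d := (ZMod.natCast_eq_natCast_iff' w m d).mp hwm
  have hdiv : w / d ≤ m / d :=
    (le_sup (f := kunzCoord d B) (mem_univ (m : ZMod d))).trans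
      ((Nat.le_div_iff_mul_le (NeZero.pos d)).mpr (by rwa [Nat.mul_comm]))
  have hwm : w ≤ m := by
    rw [← Nat.div_add_mod w d, ← Nat.div_add_mod m d, hmod]
    exact Nat.add_le_add_right (Nat.mul_le_mul_left d hdiv) _
  obtain ⟨t, ht⟩ := (Nat.modEq_iff_dvd' hwm).mp hmod
  have hm : m = w + t • d := by rw [smul_eq_mul, Nat.mul_comm, ← ht]; omega
  rw [hm]
  exact add_mem (AddSubmonoid.closure_mono hBG hw)
    (nsmul_mem (AddSubmonoid.subset_closure hdG) t)

theorem conductor_add_conductor_add_le {B : Finset ℕ} (hB : ∀ b ∈ B, 0 < b ∧ b < d)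
    (hgcd : Nat.setGcd (insert d (B : Set ℕ)) = 1) {G G' : Set ℕ} (hBG : ↑B ⊆ G) (hdG : d ∈ G)
    (hBG' : (d - ·) '' ↑B ⊆ G') (hdG' : d ∈ G') :
    conductor (numSG G) + conductor (numSG G') + d * (B.card + 1) ≤ d * d := by
  have hre := coversResidues_of_setGcd hgcd
  have hre' := coversResidues_of_setGcd
    ((setGcd_insert_image_sub fun b hb => (hB b hb).2.le).trans hgcd)
  have h1 := conductor_numSG_le hre hBG hdG
  have h2 := conductor_numSG_le hre' hBG' hdG'
  have hcore := sup_kunzCoord_add_sup_kunzCoord_add_card_lt hB hre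
  calc _ ≤ d * (univ.sup (kunzCoord d B) + univ.sup (kunzCoord d ((d - ·) '' B)) + B.card + 1) := by
        simp only [Nat.mul_add] at h1 h2 ⊢
        omega
    _ ≤ d * d := Nat.mul_le_mul_left d hcore

end KunzCoord

theorem ceil_add_div_le {c₁ c₂ d m : ℕ} (hd : 0 < d) (h : c₁ + c₂ + d * m ≤ d * d) :
    ⌈((c₁ : ℚ) + c₂) / d⌉ ≤ (d : ℤ) - m := by
  rw [Int.ceil_le, div_le_iff₀ (by exact_mod_cast hd)]
  have : ((c₁ + c₂ + d * m : ℕ) : ℚ) ≤ d * d := by exact_mod_cast h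
  push_cast at this ⊢
  linarith

section NormalForm

variable {n d : ℕ} {a : ℕ → ℕ}

theorem mem_Ioo_of_mem_image_Ioo (ha0 : a 0 = 0) (had : a (n - 1) = d)
    (hmono : ∀ i j, i < j → j ≤ n - 1 → a i < a j) :
    ∀ b ∈ (Finset.Ioo 0 (n - 1)).image a, 0 < b ∧ b < d := by
  simp only [Finset.mem_image, Finset.mem_Ioo]
  rintro _ ⟨i, hi, rfl⟩
  exact ⟨ha0 ▸ hmono 0 i hi.1 (by omega), had ▸ hmono i (n - 1) hi.2 le_rfl⟩

theorem card_image_Ioo (hmono : ∀ i j, i < j → j ≤ n - 1 → a i < a j) :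
    ((Finset.Ioo 0 (n - 1)).image a).card = n - 2 := by
  rw [Finset.card_image_of_injOn, Nat.card_Ioo]
  · omega
  · exact StrictMonoOn.injOn fun i _ j hj hij => hmono i j hij (Finset.mem_Ioo.mp hj).2.le

theorem setGcd_insert_image_Ioo (had : a (n - 1) = d) (hgcd : (Finset.Icc 1 (n - 1)).gcd a = 1) :
    Nat.setGcd (insert d ↑((Finset.Ioo 0 (n - 1)).image a)) = 1 := by
  refine Nat.dvd_one.mp ((Finset.dvd_gcd fun i hi => Nat.setGcd_dvd_of_mem ?_).trans hgcd.dvd)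
  rw [Finset.mem_Icc] at hi
  rcases eq_or_lt_of_le hi.2 with rfl | hlt
  · exact had ▸ Set.mem_insert _ _
  · exact Set.mem_insert_of_mem _ (Finset.mem_image_of_mem a (Finset.mem_Ioo.mpr ⟨hi.1, hlt⟩))

end NormalForm

/-- `⌈(c₁+c₂)/d⌉ ≤ d - n + 1`. -/
theorem ceil_conductors_le (n d : ℕ) (a : ℕ → ℕ)
    (hn : 4 ≤ n)
    (ha0 : a 0 = 0)
    (had : a (n - 1) = d)
    (hmono : ∀ i j, i < j → j ≤ n - 1 → a i < a j)
    (hgcd : (Finset.Icc 1 (n - 1)).gcd a = 1) :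
    ⌈((conductor (S1 n a) : ℚ) + (conductor (S2 n d a) : ℚ)) / (d : ℚ)⌉
      ≤ (d : ℤ) - n + 1 := by
  have hd : 0 < d := ha0 ▸ had ▸ hmono 0 (n - 1) (by omega) le_rfl
  have : NeZero d := ⟨hd.ne'⟩
  set B := (Finset.Ioo 0 (n - 1)).image a
  have hS1 : ↑B ⊆ {x | ∃ i < n, a i = x} := by
    rw [Finset.coe_image, Set.image_subset_iff]
    exact fun i hi => ⟨i, by grind, rfl⟩
  have hS2 : (d - ·) '' ↑B ⊆ {x | ∃ i < n, d - a i = x} := by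
    rw [Finset.coe_image, Set.image_image, Set.image_subset_iff]
    exact fun i hi => ⟨i, by grind, rfl⟩
  have h := conductor_add_conductor_add_le (mem_Ioo_of_mem_image_Ioo ha0 had hmono)
    (setGcd_insert_image_Ioo had hgcd) hS1 ⟨n - 1, by omega, had⟩ hS2 ⟨0, by omega, by simp [ha0]⟩
  rw [card_image_Ioo hmono] at h
  exact (ceil_add_div_le hd h).trans (by omega)

end SumsetsCurve
end
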